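/- arXiv:2010.03219 — 3 statements merged into one kernel-verified Lean document; each statement's English description precedes it below -/
import Mathlib

section
/- For p ≥ n ≥ 5, every induced cycle in Kₚ □ Cₙ whose vertex set is not a Cₙ-layer has length 3, 4, or at least n+2. Consequently Kₚ □ Cₙ is Cₙ-γ-excellent. -/
/-- The domination number of a finite simple graph. -/
noncomputable def gamma {V : Type*} [Fintype V] (G : SimpleGraph V) : ℕ :=
  sInf {k | ∃ D : Finset V, D.card = k ∧ ∀ v : V, v ∉ D → ∃ u ∈ D, G.Adj u v}

/-- `D` is a minimum dominating set (γ-set) of `G`. -/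
def IsGammaSet {V : Type*} [Fintype V] (G : SimpleGraph V) (D : Finset V) : Prop :=
  (∀ v : V, v ∉ D → ∃ u ∈ D, G.Adj u v) ∧ D.card = gamma G

/-- `G` is `H`-γ-excellent. -/
def HGammaExcellent {V W : Type*} [Fintype V] (G : SimpleGraph V) (H : SimpleGraph W) : Prop :=
  (∀ x : V, ∃ S : Set V, x ∈ S ∧ Nonempty (H ≃g G.induce S) ∧
      ∃ D : Finset V, IsGammaSet G D ∧ S ⊆ ↑D) ∧
  ∀ S : Set V, Nonempty (H ≃g G.induce S) → ∃ D : Finset V, IsGammaSet G D ∧ S ⊆ ↑D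

open SimpleGraph Finset
open Fin.CommRing

lemma cyc_adj {m : ℕ} [NeZero m] (hm : 2 ≤ m) {u v : Fin m} :
    (SimpleGraph.cycleGraph m).Adj u v ↔ u = v + 1 ∨ v = u + 1 := by
  have h1 : ((1 : Fin m) : ℕ) = 1 := by
    rw [Fin.val_one']; exact Nat.mod_eq_of_lt (by omega)
  rw [SimpleGraph.cycleGraph_adj']
  constructor
  · rintro (h | h)
    · exact Or.inl (by rw [← sub_eq_iff_eq_add']; exact Fin.ext (h.trans h1.symm))
    · exact Or.inr (by rw [← sub_eq_iff_eq_add']; exact Fin.ext (h.trans h1.symm))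
  · rintro (h | h)
    · left; rw [h, add_sub_cancel_left, h1]
    · right; rw [h, add_sub_cancel_left, h1]

lemma fin_dvd {r : ℕ} [NeZero r] {a b : ℕ} (hba : b ≤ a) (h : (a : Fin r) = (b : Fin r)) :
    r ∣ a - b := by
  have : ((a - b : ℕ) : Fin r) = 0 := by
    rw [Nat.cast_sub hba, h, sub_self]
  exact (CharP.cast_eq_zero_iff (Fin r) r _).mp this

lemma fin_induct {r : ℕ} [NeZero r] (P : Fin r → Prop) (h0 : P 0)
    (hs : ∀ i, P i → P (i + 1)) : ∀ i, P i := by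
  have key : ∀ k : ℕ, P (k : Fin r) := by
    intro k
    induction k with
    | zero => exact_mod_cast h0
    | succ m ih => rw [Nat.cast_add, Nat.cast_one]; exact hs _ ih
  intro i
  have := key i.val
  rwa [Fin.cast_val_eq_self] at this

lemma structure_lemma (p n : ℕ) (h5 : 5 ≤ n) (r : ℕ) (hr : 3 ≤ r)
    (S : Set (Fin p × Fin n))
    (φ : SimpleGraph.cycleGraph r ≃g
      (((⊤ : SimpleGraph (Fin p)) □ SimpleGraph.cycleGraph n).induce S))
    (hnl : ¬ ∃ x : Fin p, S = {q : Fin p × Fin n | q.1 = x}) :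
    r = 3 ∨ r = 4 ∨ n + 2 ≤ r := by
  haveI : NeZero r := ⟨by omega⟩
  haveI : NeZero n := ⟨by omega⟩
  set G := ((⊤ : SimpleGraph (Fin p)) □ SimpleGraph.cycleGraph n) with hG
  set f : Fin r → Fin p × Fin n := fun i => ((φ i : ↥S) : Fin p × Fin n) with hf
  have hf_inj : Function.Injective f := fun a b h => φ.toEquiv.injective (Subtype.ext h)
  have hfS : ∀ i, f i ∈ S := fun i => (φ i).2
  have hadj : ∀ i j, (SimpleGraph.cycleGraph r).Adj i j ↔ G.Adj (f i) (f j) :=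
    fun i j => φ.map_adj_iff.symm
  have hstepadj : ∀ i : Fin r, G.Adj (f i) (f (i + 1)) := by
    intro i
    exact (hadj i (i+1)).mp ((cyc_adj (by omega)).mpr (Or.inr rfl))
  set s : Fin r → ℤ := fun i =>
    if (f (i+1)).2 = (f i).2 then 0 else if (f (i+1)).2 = (f i).2 + 1 then 1 else -1 with hs
  have hsrange : ∀ i, s i = -1 ∨ s i = 0 ∨ s i = 1 := by
    intro i; simp only [hs]; split_ifs <;> simp
  have hs0 : ∀ i, s i = 0 ↔ (f (i+1)).2 = (f i).2 := by
    intro i; simp only [hs]; split_ifs with h h2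
    · simp [h]
    · exact ⟨fun h1 => by norm_num at h1, fun hcol => absurd hcol h⟩
    · exact ⟨fun h1 => by norm_num at h1, fun hcol => absurd hcol h⟩
  have hs1 : ∀ i, (f (i+1)).2 = (f i).2 + ((s i : ℤ) : Fin n) := by
    intro i
    simp only [hs]
    split_ifs with h1 h2
    · simpa using h1
    · simpa using h2
    · have hst := hstepadj i
      rw [hG, SimpleGraph.boxProd_adj] at hst
      rcases hst with ⟨_, hc⟩ | ⟨hc, _⟩
      · exact absurd hc.symm h1
      · rcases (cyc_adj (by omega)).mp hc with h | h
        · push_cast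
          rw [h]; ring
        · exact absurd h h2
  have hrow0 : ∀ i, s i = 0 → (f (i+1)).1 ≠ (f i).1 := by
    intro i h
    have hc := (hs0 i).mp h
    have hst := hstepadj i
    rw [hG, SimpleGraph.boxProd_adj] at hst
    rcases hst with ⟨ha, _⟩ | ⟨hc2, _⟩
    · exact fun he => ((SimpleGraph.top_adj _ _).mp ha) he.symm
    · rw [hc] at hc2; exact absurd hc2 (SimpleGraph.irrefl _)
  have hrow1 : ∀ i, s i ≠ 0 → (f (i+1)).1 = (f i).1 := by
    intro i h
    have hc : (f (i+1)).2 ≠ (f i).2 := fun he => h ((hs0 i).mpr he)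
    have hst := hstepadj i
    rw [hG, SimpleGraph.boxProd_adj] at hst
    rcases hst with ⟨_, hc2⟩ | ⟨_, h1⟩
    · exact absurd hc2.symm hc
    · exact h1.symm
  have htel : ((∑ i : Fin r, s i : ℤ) : Fin n) = 0 := by
    push_cast
    have hterm : ∀ i : Fin r, ((s i : ℤ) : Fin n) = (f (i+1)).2 - (f i).2 := by
      intro i; rw [hs1 i]; ring
    rw [Finset.sum_congr rfl (fun i _ => hterm i), Finset.sum_sub_distrib,
      Fintype.sum_equiv (Equiv.addRight (1 : Fin r)) (fun i => (f (i+1)).2)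
        (fun i => (f i).2) (fun i => rfl)]
    ring
  have hkey : ∀ i j : Fin r, i ≠ j → (f i).2 = (f j).2 → i = j + 1 ∨ j = i + 1 := by
    intro i j hne hcol
    have hrne : (f i).1 ≠ (f j).1 := fun h => hne (hf_inj (Prod.ext h hcol))
    have hA : G.Adj (f i) (f j) :=
      SimpleGraph.boxProd_adj.mpr (Or.inl ⟨(SimpleGraph.top_adj _ _).mpr hrne, hcol⟩)
    exact (cyc_adj (by omega)).mp ((hadj i j).mpr hA)
  have hkey' : ∀ (i : Fin r) (d : Fin r), (f (i + d)).2 = (f i).2 →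
      d = 0 ∨ d = 1 ∨ d = -1 := by
    intro i d hcol
    by_cases hd : d = 0
    · exact Or.inl hd
    have hne : i + d ≠ i := fun h => hd (by simpa using h)
    rcases hkey _ _ hne hcol with h | h
    · exact Or.inr (Or.inl (add_left_cancel h))
    · right; right
      have h0 : i + 0 = i + (d + 1) := by rw [add_zero, ← add_assoc]; exact h
      exact eq_neg_of_add_eq_zero_left (add_left_cancel h0).symm
  have conv2 : ((2 : Fin r) = 0 ∨ (2 : Fin r) = 1 ∨ (2 : Fin r) = -1) → r = 3 := by
    rintro (h | h | h)
    · have hd := fin_dvd (by norm_num) (show ((2:ℕ) : Fin r) = ((0:ℕ) : Fin r) by push_cast; exact h)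
      have := Nat.le_of_dvd (by norm_num) hd; omega
    · have hd := fin_dvd (by norm_num) (show ((2:ℕ) : Fin r) = ((1:ℕ) : Fin r) by push_cast; exact h)
      have := Nat.le_of_dvd (by norm_num) hd; omega
    · have h3 : ((3:ℕ) : Fin r) = ((0:ℕ) : Fin r) := by
        push_cast
        rw [show (3 : Fin r) = 2 + 1 by norm_num, h]; ring
      have hd := fin_dvd (by norm_num) h3
      have := Nat.le_of_dvd (by norm_num) hd; omega
  have conv3 : ((3 : Fin r) = 0 ∨ (3 : Fin r) = 1 ∨ (3 : Fin r) = -1) → r = 3 ∨ r = 4 := by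
    rintro (h | h | h)
    · have hd := fin_dvd (by norm_num) (show ((3:ℕ) : Fin r) = ((0:ℕ) : Fin r) by push_cast; exact h)
      have := Nat.le_of_dvd (by norm_num) hd; omega
    · have hd := fin_dvd (by norm_num) (show ((3:ℕ) : Fin r) = ((1:ℕ) : Fin r) by push_cast; exact h)
      have := Nat.le_of_dvd (by norm_num) hd
      omega
    · have h4 : ((4:ℕ) : Fin r) = ((0:ℕ) : Fin r) := by
        push_cast
        rw [show (4 : Fin r) = 3 + 1 by norm_num, h]; ring
      have hd := fin_dvd (by norm_num) h4
      have hle := Nat.le_of_dvd (by norm_num) hd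
      interval_cases r <;> omega

  have hone : ((1 : Fin r) : ℕ) = 1 := by
    rw [Fin.val_one']; exact Nat.mod_eq_of_lt (by omega)
  by_cases htot : (∑ i : Fin r, s i) = 0
  -- CASE A : winding number zero
  · set L : Fin r → ℤ := fun i => ∑ j ∈ Finset.range i.val, s (j : Fin r) with hL
    have hsumr : ∑ j ∈ Finset.range r, s (j : Fin r) = 0 := by
      rw [← Fin.sum_univ_eq_sum_range (fun j => s (j : Fin r)) r]
      rw [Fintype.sum_congr _ _ (fun i => by rw [Fin.cast_val_eq_self])]
      exact htot
    have hstepl : ∀ i : Fin r, L (i + 1) = L i + s i := by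
      intro i
      by_cases hi : i.val + 1 < r
      · have hval : ((i + 1 : Fin r)).val = i.val + 1 := by
          rw [Fin.val_add, hone]; exact Nat.mod_eq_of_lt hi
        simp only [hL, hval, Finset.sum_range_succ, Fin.cast_val_eq_self]
      · have hiv : i.val = r - 1 := by have := i.isLt; omega
        have hval : ((i + 1 : Fin r)).val = 0 := by
          rw [Fin.val_add, hone, hiv, show r - 1 + 1 = r from by omega, Nat.mod_self]
        have hL0 : L (i + 1) = 0 := by simp [hL, hval]
        have hLs : L i + s i = ∑ j ∈ Finset.range r, s (j : Fin r) := by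
          rw [show Finset.range r = Finset.range (i.val + 1) from by
            rw [show i.val + 1 = r from by omega]]
          rw [Finset.sum_range_succ, Fin.cast_val_eq_self]
        rw [hL0, hLs, hsumr]
    have hlc : ∀ i, (f i).2 = (f 0).2 + ((L i : ℤ) : Fin n) := by
      apply fin_induct
      · simp [hL]
      · intro i ih
        rw [hs1 i, ih, hstepl]
        push_cast
        ring
    have hsame : ∀ i j, L i = L j → (f i).2 = (f j).2 := fun i j h => by
      rw [hlc i, hlc j, h]
    obtain ⟨i₀, -, hmaxm⟩ := Finset.exists_max_image Finset.univ L ⟨0, Finset.mem_univ 0⟩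
    have hmax : ∀ j, L j ≤ L i₀ := fun j => hmaxm j (Finset.mem_univ j)
    have hsub : (i₀ - 1) + 1 = i₀ := by ring
    have h1 : s i₀ ≤ 0 := by
      have := hmax (i₀ + 1); rw [hstepl] at this; linarith
    have h2 : 0 ≤ s (i₀ - 1) := by
      have hst := hstepl (i₀ - 1); rw [hsub] at hst
      have := hmax (i₀ - 1); linarith
    have hc1 : s i₀ = 0 ∨ s i₀ = -1 := by
      rcases hsrange i₀ with h | h | h
      exacts [Or.inr h, Or.inl h, absurd h (by omega)]
    have hc2 : s (i₀ - 1) = 0 ∨ s (i₀ - 1) = 1 := by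
      rcases hsrange (i₀ - 1) with h | h | h
      exacts [absurd h (by omega), Or.inl h, Or.inr h]
    have hLm1 : L i₀ = L (i₀ - 1) + s (i₀ - 1) := by
      conv_lhs => rw [← hsub, hstepl]
    rcases hc1 with hA | hA <;> rcases hc2 with hB | hB
    · -- s i₀ = 0, s (i₀ - 1) = 0 : r = 3
      left
      apply conv2
      apply hkey' (i₀ - 1) 2
      apply hsame
      rw [show (i₀ - 1) + 2 = i₀ + 1 from by ring, hstepl, hA, hLm1, hB]
      ring
    · -- s i₀ = 0, s (i₀ - 1) = 1
      have h3 : s (i₀ + 1) ≤ 0 := by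
        have hm := hmax (i₀ + 1 + 1)
        rw [hstepl, hstepl, hA] at hm
        linarith
      have hc3 : s (i₀ + 1) = 0 ∨ s (i₀ + 1) = -1 := by
        rcases hsrange (i₀ + 1) with h | h | h
        exacts [Or.inr h, Or.inl h, absurd h (by omega)]
      rcases hc3 with hC | hC
      · left
        apply conv2
        apply hkey' i₀ 2
        apply hsame
        rw [show i₀ + 2 = (i₀ + 1) + 1 from by ring, hstepl, hstepl, hA, hC]
        ring
      · apply Or.imp id Or.inl
        apply conv3
        apply hkey' (i₀ - 1) 3
        apply hsame
        rw [show (i₀ - 1) + 3 = (i₀ + 1) + 1 from by ring, hstepl, hstepl, hA, hC, hLm1, hB]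
        ring
    · -- s i₀ = -1, s (i₀ - 1) = 0
      have hLm2 : L (i₀ - 1) = L (i₀ - 2) + s (i₀ - 2) := by
        conv_lhs => rw [show i₀ - 1 = (i₀ - 2) + 1 from by ring, hstepl]
      have h3 : 0 ≤ s (i₀ - 2) := by
        have := hmax (i₀ - 2)
        rw [hLm2, hB] at hLm1
        linarith
      have hc3 : s (i₀ - 2) = 0 ∨ s (i₀ - 2) = 1 := by
        rcases hsrange (i₀ - 2) with h | h | h
        exacts [absurd h (by omega), Or.inl h, Or.inr h]
      rcases hc3 with hC | hC
      · left
        apply conv2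
        apply hkey' (i₀ - 2) 2
        apply hsame
        rw [show (i₀ - 2) + 2 = i₀ from by ring, hLm1, hLm2, hB, hC]
        ring
      · apply Or.imp id Or.inl
        apply conv3
        apply hkey' (i₀ - 2) 3
        apply hsame
        rw [show (i₀ - 2) + 3 = i₀ + 1 from by ring, hstepl, hA, hLm1, hLm2, hB, hC]
        ring
    · -- s i₀ = -1, s (i₀ - 1) = 1 : r = 3
      left
      apply conv2
      apply hkey' (i₀ - 1) 2
      apply hsame
      rw [show (i₀ - 1) + 2 = i₀ + 1 from by ring, hstepl, hA, hLm1, hB]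
      ring
  -- CASE B : nonzero winding number
  · have hdvd : (n : ℤ) ∣ (∑ i : Fin r, s i) :=
      (CharP.intCast_eq_zero_iff (Fin n) n _).mp htel
    have habs : (n : ℤ) ≤ |∑ i : Fin r, s i| :=
      Int.le_of_dvd (abs_pos.mpr htot) ((dvd_abs _ _).mpr hdvd)
    set Z : Finset (Fin r) := Finset.univ.filter (fun i => s i = 0) with hZdef
    set NZ : Finset (Fin r) := Finset.univ.filter (fun i => ¬ s i = 0) with hNZdef
    have hsplit : Z.card + NZ.card = r := by
      rw [hZdef, hNZdef, Finset.card_filter_add_card_filter_not]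
      simp
    have hNZ : n ≤ NZ.card := by
      have h1 : |∑ i : Fin r, s i| ≤ ∑ i : Fin r, |s i| :=
        Finset.abs_sum_le_sum_abs _ _
      have h2 : ∑ i : Fin r, |s i| = ∑ i ∈ NZ, |s i| := by
        refine (Finset.sum_subset (Finset.subset_univ NZ) ?_).symm
        intro i _ hi
        have : s i = 0 := by
          by_contra hne
          exact hi (by simp [hNZdef, hne])
        simp [this]
      have h3 : ∑ i ∈ NZ, |s i| ≤ ∑ _i ∈ NZ, (1 : ℤ) := by
        refine Finset.sum_le_sum ?_
        intro i _
        rcases hsrange i with h | h | h <;> simp [h]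
      have h4 : ∑ _i ∈ NZ, (1 : ℤ) = NZ.card := by simp
      have : (n : ℤ) ≤ (NZ.card : ℤ) := by linarith
      exact_mod_cast this
    by_cases hz0 : Z.card = 0
    · -- no zero steps : S is a layer, contradiction
      exfalso
      have hall : ∀ i, s i ≠ 0 := by
        intro i hi
        have : i ∈ Z := by simp [hZdef, hi]
        rw [Finset.card_eq_zero.mp hz0] at this
        exact absurd this (Finset.notMem_empty i)
      have hconst : ∀ i, (f i).1 = (f 0).1 :=
        fin_induct _ rfl (fun i ih => (hrow1 i (hall i)).trans ih)
      apply hnl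
      refine ⟨(f 0).1, ?_⟩
      have hcinj : Function.Injective (fun i => (f i).2) := by
        intro a b h
        exact hf_inj (Prod.ext ((hconst a).trans (hconst b).symm) h)
      have hrn : r = n := by
        have hle : r ≤ n := by simpa using Fintype.card_le_of_injective _ hcinj
        omega
      have hcsurj : Function.Surjective (fun i : Fin r => (f i).2) :=
        ((Fintype.bijective_iff_injective_and_card _).mpr ⟨hcinj, by simp [hrn]⟩).2
      ext q
      constructor
      · intro hq
        have hfq : f (φ.symm ⟨q, hq⟩) = q := congrArg Subtype.val (φ.apply_symm_apply ⟨q, hq⟩)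
        rw [← hfq]
        exact hconst _
      · intro hq
        obtain ⟨i, hi⟩ := hcsurj q.2
        have : f i = q := Prod.ext (by rw [hconst i]; exact hq.symm) hi
        rw [← this]
        exact hfS i
    by_cases hz1 : Z.card = 1
    · -- exactly one zero step : impossible
      exfalso
      obtain ⟨i₀, hZs⟩ := Finset.card_eq_one.mp hz1
      have hi₀ : s i₀ = 0 := by
        have : i₀ ∈ Z := hZs ▸ Finset.mem_singleton_self i₀
        simpa [hZdef] using this
      have huniq : ∀ j, s j = 0 → j = i₀ := by
        intro j hj
        have : j ∈ Z := by simp [hZdef, hj]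
        rw [hZs] at this
        exact Finset.mem_singleton.mp this
      have hind : ∀ m : ℕ, m < r → (f (i₀ + 1 + (m : Fin r))).1 = (f (i₀ + 1)).1 := by
        intro m
        induction m with
        | zero => intro _; norm_num
        | succ k ih =>
          intro hk
          have hne : i₀ + 1 + ((k : ℕ) : Fin r) ≠ i₀ := by
            intro h
            have h0 : ((k + 1 : ℕ) : Fin r) = 0 := by
              push_cast
              have h1 : i₀ + (1 + ((k : ℕ) : Fin r)) = i₀ + 0 := by
                rw [← add_assoc, h, add_zero]
              have h2 := add_left_cancel h1
              rw [add_comm] at h2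
              exact h2
            have hdvd2 := (CharP.cast_eq_zero_iff (Fin r) r _).mp h0
            have := Nat.le_of_dvd (by omega) hdvd2
            omega
          have hsne : s (i₀ + 1 + ((k : ℕ) : Fin r)) ≠ 0 := fun h0 => hne (huniq _ h0)
          have hstep1 := hrow1 _ hsne
          rw [show ((k + 1 : ℕ) : Fin r) = ((k : ℕ) : Fin r) + 1 from by push_cast; ring,
            show i₀ + 1 + (((k : ℕ) : Fin r) + 1) = (i₀ + 1 + ((k : ℕ) : Fin r)) + 1 from by ring,
            hstep1]
          exact ih (by omega)
      have hfin := hind (r - 1) (by omega)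
      have hvr : i₀ + 1 + ((r - 1 : ℕ) : Fin r) = i₀ := by
        have hr0 : ((r - 1 : ℕ) : Fin r) + 1 = 0 := by
          have : (((r - 1) + 1 : ℕ) : Fin r) = 0 := by
            rw [show r - 1 + 1 = r from by omega]
            exact_mod_cast Fin.natCast_self r
          push_cast at this
          exact this
        rw [add_assoc, add_comm (1 : Fin r), hr0, add_zero]
      rw [hvr] at hfin
      exact hrow0 i₀ hi₀ hfin.symm
    · right; right
      omega

/-- the `Cₙ`-layer through `x`, as a finset -/
def layerF (p n : ℕ) (x : Fin p) : Finset (Fin p × Fin n) :=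
  Finset.univ.image (fun w : Fin n => (x, w))

lemma layer_card (p n : ℕ) (x : Fin p) : (layerF p n x).card = n := by
  rw [layerF, Finset.card_image_of_injective _ (fun a b h => congrArg Prod.snd h)]
  simp

lemma layer_dominates (p n : ℕ) (x : Fin p) :
    ∀ v : Fin p × Fin n, v ∉ layerF p n x →
      ∃ u ∈ layerF p n x, ((⊤ : SimpleGraph (Fin p)) □ SimpleGraph.cycleGraph n).Adj u v := by
  intro v hv
  refine ⟨(x, v.2), Finset.mem_image.mpr ⟨v.2, Finset.mem_univ _, rfl⟩, ?_⟩
  have hne : x ≠ v.1 := by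
    intro h
    exact hv (Finset.mem_image.mpr ⟨v.2, Finset.mem_univ _, by rw [h]⟩)
  exact SimpleGraph.boxProd_adj.mpr (Or.inl ⟨(SimpleGraph.top_adj _ _).mpr hne, rfl⟩)

lemma gamma_box (p n : ℕ) (h5 : 5 ≤ n) (hp : n ≤ p) :
    gamma ((⊤ : SimpleGraph (Fin p)) □ SimpleGraph.cycleGraph n) = n := by
  have hmem : n ∈ {k | ∃ D : Finset (Fin p × Fin n), D.card = k ∧
      ∀ v, v ∉ D → ∃ u ∈ D, ((⊤ : SimpleGraph (Fin p)) □ SimpleGraph.cycleGraph n).Adj u v} :=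
    ⟨layerF p n ⟨0, by omega⟩, layer_card p n _, layer_dominates p n _⟩
  apply le_antisymm
  · exact Nat.sInf_le hmem
  · apply le_csInf ⟨n, hmem⟩
    rintro k ⟨D, hcard, hdom⟩
    by_cases hall : ∀ v : Fin n, ∃ q ∈ D, q.2 = v
    · have hsub : (Finset.univ : Finset (Fin n)) ⊆ D.image Prod.snd := by
        intro v _
        obtain ⟨q, hq, hq2⟩ := hall v
        exact Finset.mem_image.mpr ⟨q, hq, hq2⟩
      have := (Finset.card_le_card hsub).trans Finset.card_image_le
      simp only [Finset.card_univ, Fintype.card_fin, hcard] at this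
      exact this
    · push_neg at hall
      obtain ⟨v₀, hv₀⟩ := hall
      have hsub : (Finset.univ : Finset (Fin p)) ⊆ D.image Prod.fst := by
        intro y _
        have hnd : (y, v₀) ∉ D := fun h => hv₀ _ h rfl
        obtain ⟨u, hu, hadj⟩ := hdom _ hnd
        rcases SimpleGraph.boxProd_adj.mp hadj with ⟨_, h2⟩ | ⟨_, h1⟩
        · exact absurd h2 (hv₀ u hu)
        · exact Finset.mem_image.mpr ⟨u, hu, h1⟩
      have := (Finset.card_le_card hsub).trans Finset.card_image_le
      simp only [Finset.card_univ, Fintype.card_fin, hcard] at this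
      omega

lemma layer_gammaSet (p n : ℕ) (h5 : 5 ≤ n) (hp : n ≤ p) (x : Fin p) :
    IsGammaSet ((⊤ : SimpleGraph (Fin p)) □ SimpleGraph.cycleGraph n) (layerF p n x) :=
  ⟨layer_dominates p n x, by rw [layer_card, gamma_box p n h5 hp]⟩

lemma layer_subset (p n : ℕ) (x : Fin p) :
    {q : Fin p × Fin n | q.1 = x} ⊆ ↑(layerF p n x) := by
  intro q hq
  simp only [layerF, Finset.coe_image, Finset.coe_univ, Set.image_univ]
  exact ⟨q.2, Prod.ext hq.symm rfl⟩

lemma layer_iso (p n : ℕ) (x : Fin p) :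
    Nonempty (SimpleGraph.cycleGraph n ≃g
      (((⊤ : SimpleGraph (Fin p)) □ SimpleGraph.cycleGraph n).induce
        {q : Fin p × Fin n | q.1 = x})) := by
  refine ⟨⟨⟨fun v => ⟨(x, v), rfl⟩, fun q => q.val.2, fun v => rfl,
    fun q => Subtype.ext (Prod.ext q.prop.symm rfl)⟩, ?_⟩⟩
  intro u v
  show ((⊤ : SimpleGraph (Fin p)) □ SimpleGraph.cycleGraph n).Adj (x, u) (x, v) ↔ _
  rw [SimpleGraph.boxProd_adj]
  constructor
  · rintro (⟨h1, -⟩ | ⟨h2, -⟩)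
    · exact absurd rfl ((SimpleGraph.top_adj _ _).mp h1)
    · exact h2
  · intro h
    exact Or.inr ⟨h, rfl⟩


/-- For `p ≥ n ≥ 5`, every induced cycle of `Kₚ □ Cₙ` whose vertex set is not a `Cₙ`-layer has
length 3, 4, or at least `n + 2`; consequently `Kₚ □ Cₙ` is `Cₙ`-γ-excellent. -/
theorem boxProd_complete_cycle_excellent (p n : ℕ) (h5 : 5 ≤ n) (hp : n ≤ p) :
    (∀ r : ℕ, 3 ≤ r → ∀ S : Set (Fin p × Fin n),
      Nonempty (SimpleGraph.cycleGraph r ≃g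
        (((⊤ : SimpleGraph (Fin p)) □ SimpleGraph.cycleGraph n).induce S)) →
      (¬ ∃ x : Fin p, S = {q : Fin p × Fin n | q.1 = x}) →
      r = 3 ∨ r = 4 ∨ n + 2 ≤ r) ∧
    HGammaExcellent ((⊤ : SimpleGraph (Fin p)) □ SimpleGraph.cycleGraph n)
      (SimpleGraph.cycleGraph n) := by
  refine ⟨fun r hr S hiso hnl => ?_, fun x => ?_, fun S hiso => ?_⟩
  · obtain ⟨φ⟩ := hiso
    exact structure_lemma p n h5 r hr S φ hnl
  · exact ⟨{q | q.1 = x.1}, rfl, layer_iso p n x.1,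
      layerF p n x.1, layer_gammaSet p n h5 hp x.1, layer_subset p n x.1⟩
  · by_cases hl : ∃ x : Fin p, S = {q : Fin p × Fin n | q.1 = x}
    · obtain ⟨x, rfl⟩ := hl
      exact ⟨layerF p n x, layer_gammaSet p n h5 hp x, layer_subset p n x⟩
    · obtain ⟨φ⟩ := hiso
      have := structure_lemma p n h5 n (by omega) S φ hl
      omega
end

section
/- Let G[Φ] be the generalized lexicographic product of a connected graph G of order n ≥ 2 with graphs F₁,…,Fₙ where γ(Fₖ) ≥ 3 for all k. Then every minimum dominating set D of G[Φ] satisfies |D ∩ V(Fᵢ)| ≤ 1 for all i, and D is a total dominating set of G[Φ]. -/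
/-- The generalized lexicographic product `G[Φ]` of `G : SimpleGraph (Fin n)` with a family
`F i : SimpleGraph (W i)`: each `F i` is induced, and vertices in distinct fibers `i ≠ j`
are adjacent iff `i` and `j` are adjacent in `G`. -/
def glex {n : ℕ} {W : Fin n → Type*} (G : SimpleGraph (Fin n))
    (F : ∀ i, SimpleGraph (W i)) : SimpleGraph (Σ i, W i) :=
  SimpleGraph.fromRel (fun x y =>
    if h : x.1 = y.1 then (F x.1).Adj x.2 (cast (congrArg W h.symm) y.2)
    else G.Adj x.1 y.1)

lemma glex_adj_of_ne {n : ℕ} {W : Fin n → Type*} (G : SimpleGraph (Fin n))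
    (F : ∀ i, SimpleGraph (W i)) {x y : Σ i, W i} (h : x.1 ≠ y.1) :
    (glex G F).Adj x y ↔ G.Adj x.1 y.1 := by
  simp only [glex, SimpleGraph.fromRel_adj]
  rw [dif_neg h, dif_neg (Ne.symm h)]
  constructor
  · rintro ⟨-, h1 | h2⟩
    · exact h1
    · exact h2.symm
  · intro ha
    exact ⟨fun e => h (congrArg Sigma.fst e), Or.inl ha⟩

lemma glex_adj_same {n : ℕ} {W : Fin n → Type*} (G : SimpleGraph (Fin n))
    (F : ∀ i, SimpleGraph (W i)) {i : Fin n} {a b : W i} :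
    (glex G F).Adj ⟨i, a⟩ ⟨i, b⟩ ↔ (F i).Adj a b := by
  have hcast : ∀ (h : W i = W i) (c : W i), cast h c = c :=
    fun h c => cast_eq_iff_heq.mpr HEq.rfl
  simp only [glex, SimpleGraph.fromRel_adj, dite_true, hcast]
  constructor
  · rintro ⟨-, h | h⟩
    · exact h
    · exact h.symm
  · intro h
    refine ⟨fun e => (F i).ne_of_adj h ?_, Or.inl h⟩
    exact (Sigma.mk.inj_iff.mp e).2.eq

lemma gamma_le {V : Type*} [Fintype V] (G : SimpleGraph V) (D : Finset V)
    (hD : ∀ v : V, v ∉ D → ∃ u ∈ D, G.Adj u v) : gamma G ≤ D.card :=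
  Nat.sInf_le ⟨D, rfl, hD⟩

lemma nonempty_of_gamma {V : Type*} [Fintype V] (G : SimpleGraph V) (h : 1 ≤ gamma G) :
    Nonempty V := by
  by_contra he
  have h0 : gamma G ≤ (∅ : Finset V).card :=
    gamma_le G ∅ (fun v _ => (he ⟨v⟩).elim)
  simp at h0
  omega

lemma exists_adj_of_connected {n : ℕ} (G : SimpleGraph (Fin n)) (hn : 2 ≤ n)
    (hc : G.Connected) (i : Fin n) : ∃ j, G.Adj i j := by
  have h1 : 1 < Fintype.card (Fin n) := by simp only [Fintype.card_fin]; omega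
  obtain ⟨i', hi'⟩ := Fintype.exists_ne_of_one_lt_card h1 i
  obtain ⟨w⟩ := hc i i'
  cases w with
  | nil => exact (hi' rfl).elim
  | cons h p => exact ⟨_, h⟩


/-- If `G` is connected of order `n ≥ 2` and `γ(Fₖ) ≥ 3` for all `k`, then every minimum
dominating set `D` of `G[Φ]` meets each fiber in at most one vertex and is a total
dominating set of `G[Φ]`. -/
theorem glex_gammaSet_total {n : ℕ} {W : Fin n → Type*} [∀ i, Fintype (W i)]
    (G : SimpleGraph (Fin n)) (F : ∀ i, SimpleGraph (W i))
    (hn : 2 ≤ n) (hconn : G.Connected) (hγF : ∀ i, 3 ≤ gamma (F i))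
    (D : Finset (Σ i, W i)) (hD : IsGammaSet (glex G F) D) :
    (∀ i : Fin n, (D.filter (fun x => x.1 = i)).card ≤ 1) ∧
    (∀ v : Σ i, W i, ∃ u ∈ D, (glex G F).Adj u v) := by
  classical
  obtain ⟨hdom, hcard⟩ := hD
  have hWne : ∀ i, Nonempty (W i) :=
    fun i => nonempty_of_gamma (F i) (le_trans (by norm_num) (hγF i))
  -- Step B : every fiber is dominated externally
  have ext_dom : ∀ i : Fin n, ∃ u ∈ D, u.1 ≠ i ∧ G.Adj u.1 i := by
    intro i
    by_contra hno
    push_neg at hno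
    -- the trace of D on fiber i dominates F i
    set D2 : Finset (W i) := Finset.univ.filter (fun a => (⟨i, a⟩ : Σ k, W k) ∈ D) with hD2def
    have hD2dom : ∀ a : W i, a ∉ D2 → ∃ b ∈ D2, (F i).Adj b a := by
      intro a ha
      have haD : (⟨i, a⟩ : Σ k, W k) ∉ D := by simpa [hD2def] using ha
      obtain ⟨u, huD, hu⟩ := hdom _ haD
      by_cases h1 : u.1 = i
      · obtain ⟨k, b⟩ := u
        subst h1
        exact ⟨b, by simpa [hD2def] using huD, (glex_adj_same G F).mp hu⟩
      · have : G.Adj u.1 i := (glex_adj_of_ne G F h1).mp hu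
        exact absurd this (hno u huD h1)
    have h3 : 3 ≤ D2.card := le_trans (hγF i) (gamma_le (F i) D2 hD2dom)
    have hinj : D2.card ≤ (D.filter (fun x => x.1 = i)).card := by
      apply Finset.card_le_card_of_injOn (fun a => (⟨i, a⟩ : Σ k, W k))
      · intro a ha
        simp only [hD2def, Finset.mem_coe, Finset.mem_filter, Finset.mem_univ, true_and] at ha
        simp [ha]
      · intro a _ b _ e
        exact sigma_mk_injective e
    -- build a smaller dominating set
    obtain ⟨j, hij⟩ := exists_adj_of_connected G hn hconn i
    obtain ⟨a⟩ := hWne i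
    obtain ⟨b⟩ := hWne j
    set D' : Finset (Σ k, W k) :=
      insert ⟨i, a⟩ (insert ⟨j, b⟩ (D.filter (fun x => ¬ x.1 = i))) with hD'def
    have hD'dom : ∀ v : Σ k, W k, v ∉ D' → ∃ u ∈ D', (glex G F).Adj u v := by
      intro v hv
      by_cases hvi : v.1 = i
      · refine ⟨⟨j, b⟩, by simp [hD'def], ?_⟩
        refine (glex_adj_of_ne G F ?_).mpr ?_
        · rw [hvi]; exact (G.ne_of_adj hij).symm
        · rw [hvi]; exact hij.symm
      · have hvD : v ∉ D := by
          intro hvD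
          exact hv (by simp [hD'def, Finset.mem_filter, hvD, hvi])
        obtain ⟨u, huD, hu⟩ := hdom v hvD
        by_cases h1 : u.1 = i
        · refine ⟨⟨i, a⟩, by simp [hD'def], ?_⟩
          refine (glex_adj_of_ne G F (fun e => hvi e.symm)).mpr ?_
          have : G.Adj u.1 v.1 := (glex_adj_of_ne G F (h1 ▸ fun e => hvi e.symm : u.1 ≠ v.1)).mp hu
          rwa [h1] at this
        · exact ⟨u, by simp [hD'def, Finset.mem_filter, huD, h1], hu⟩
    have hle : gamma (glex G F) ≤ D'.card := gamma_le _ _ hD'dom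
    have hsplit : (D.filter (fun x => ¬ x.1 = i)).card + (D.filter (fun x => x.1 = i)).card
        = D.card := by
      rw [add_comm]
      exact Finset.card_filter_add_card_filter_not (p := fun x : Σ k, W k => x.1 = i)
    have hD'card : D'.card ≤ (D.filter (fun x => ¬ x.1 = i)).card + 2 := by
      calc D'.card ≤ (insert (⟨j, b⟩ : Σ k, W k) (D.filter (fun x => ¬ x.1 = i))).card + 1 :=
            Finset.card_insert_le _ _
        _ ≤ (D.filter (fun x => ¬ x.1 = i)).card + 1 + 1 := by
            exact Nat.add_le_add_right (Finset.card_insert_le _ _) 1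
        _ = (D.filter (fun x => ¬ x.1 = i)).card + 2 := by ring
    omega
  -- total domination
  have total : ∀ v : Σ k, W k, ∃ u ∈ D, (glex G F).Adj u v := by
    intro v
    obtain ⟨u, huD, hne, hadj⟩ := ext_dom v.1
    exact ⟨u, huD, (glex_adj_of_ne G F hne).mpr hadj⟩
  refine ⟨?_, total⟩
  intro i
  by_contra hgt
  push_neg at hgt
  obtain ⟨x, hx, y, hy, hxy⟩ := Finset.one_lt_card.mp hgt
  simp only [Finset.mem_filter] at hx hy
  -- D.erase x is still dominating
  have herase : ∀ v : Σ k, W k, v ∉ D.erase x → ∃ u ∈ D.erase x, (glex G F).Adj u v := by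
    intro v hv
    by_cases hvi : v.1 = i
    · obtain ⟨u, huD, hne, hadj⟩ := ext_dom i
      refine ⟨u, Finset.mem_erase.mpr ⟨fun e => hne (by rw [e]; exact hx.2), huD⟩, ?_⟩
      exact (glex_adj_of_ne G F (hvi ▸ hne)).mpr (hvi ▸ hadj)
    · have hvD : v ∉ D := by
        intro hvD
        have hvx : v ≠ x := fun e => hvi (e ▸ hx.2)
        exact hv (Finset.mem_erase.mpr ⟨hvx, hvD⟩)
      obtain ⟨u, huD, hu⟩ := hdom v hvD
      by_cases hux : u = x
      · subst hux
        refine ⟨y, Finset.mem_erase.mpr ⟨hxy.symm, hy.1⟩, ?_⟩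
        have h1 : u.1 ≠ v.1 := by rw [hx.2]; exact fun e => hvi e.symm
        have hGuv : G.Adj u.1 v.1 := (glex_adj_of_ne G F h1).mp hu
        refine (glex_adj_of_ne G F ?_).mpr ?_
        · rw [hy.2]; exact fun e => hvi e.symm
        · rw [hy.2, ← hx.2]; exact hGuv
      · exact ⟨u, Finset.mem_erase.mpr ⟨hux, huD⟩, hu⟩
  have hle : gamma (glex G F) ≤ (D.erase x).card := gamma_le _ _ herase
  have hlt : (D.erase x).card < D.card :=
    Finset.card_erase_lt_of_mem hx.1
  omega
end

section
/- Let G[Φ] be the generalized lexicographic product of a connected graph G of order n ≥ 2 with complete graphs F₁,…,Fₙ each of order at least 2, and let s ≥ 1. Then G[Φ] is K̄ₛ-γ-excellent if and only if G is K̄ₛ-γ-excellent. -/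
/-- `G` is `K̄ₛ`-γ-excellent: every independent set of size `s` is contained in a minimum
dominating set, and every vertex lies in an independent set of size `s` contained in a
minimum dominating set. -/
def KbarGammaExcellent {V : Type*} [Fintype V] (G : SimpleGraph V) (s : ℕ) : Prop :=
  (∀ I : Finset V, (∀ u ∈ I, ∀ v ∈ I, ¬ G.Adj u v) → I.card = s →
    ∃ D : Finset V, IsGammaSet G D ∧ I ⊆ D) ∧
  ∀ x : V, ∃ I : Finset V, x ∈ I ∧ (∀ u ∈ I, ∀ v ∈ I, ¬ G.Adj u v) ∧ I.card = s ∧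
    ∃ D : Finset V, IsGammaSet G D ∧ I ⊆ D

section Aux

variable {n : ℕ} {W : Fin n → Type*} [∀ i, Fintype (W i)]
variable {G : SimpleGraph (Fin n)} {F : ∀ i, SimpleGraph (W i)}

lemma glex_adj (hcomp : ∀ i, ∀ a b : W i, a ≠ b → (F i).Adj a b)
    {x y : Σ i, W i} :
    (glex G F).Adj x y ↔ x ≠ y ∧ (x.1 = y.1 ∨ G.Adj x.1 y.1) := by
  constructor
  · rintro h
    rw [glex, SimpleGraph.fromRel_adj] at h
    obtain ⟨hne, h⟩ := h
    refine ⟨hne, ?_⟩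
    by_cases hij : x.1 = y.1
    · exact Or.inl hij
    · rcases h with h | h
      · rw [dif_neg hij] at h; exact Or.inr h
      · rw [dif_neg (fun e => hij e.symm)] at h; exact Or.inr h.symm
  · rintro ⟨hne, hij | hadj⟩
    · rw [glex, SimpleGraph.fromRel_adj]
      refine ⟨hne, Or.inl ?_⟩
      rw [dif_pos hij]
      obtain ⟨i, a⟩ := x
      obtain ⟨j, b⟩ := y
      cases hij
      simp only [cast_eq]
      exact hcomp i a b (fun e => hne (by cases e; rfl))
    · rw [glex, SimpleGraph.fromRel_adj]
      exact ⟨hne, Or.inl (by rw [dif_neg hadj.ne]; exact hadj)⟩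

lemma gamma_le_card {V : Type*} [Fintype V] {G : SimpleGraph V} {D : Finset V}
    (h : ∀ v : V, v ∉ D → ∃ u ∈ D, G.Adj u v) : gamma G ≤ D.card :=
  Nat.sInf_le ⟨D, rfl, h⟩

lemma exists_isGammaSet {V : Type*} [Fintype V] (G : SimpleGraph V) :
    ∃ D : Finset V, IsGammaSet G D := by
  have hne : {k | ∃ D : Finset V, D.card = k ∧ ∀ v : V, v ∉ D → ∃ u ∈ D, G.Adj u v}.Nonempty :=
    ⟨Finset.univ.card, Finset.univ, rfl, fun v hv => absurd (Finset.mem_univ v) hv⟩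
  obtain ⟨D, hD, hdom⟩ := Nat.sInf_mem hne
  exact ⟨D, hdom, hD⟩

lemma dom_image_fst (hcard : ∀ i, 2 ≤ Fintype.card (W i))
    (hcomp : ∀ i, ∀ a b : W i, a ≠ b → (F i).Adj a b)
    {D : Finset (Σ i, W i)} (hD : ∀ v, v ∉ D → ∃ u ∈ D, (glex G F).Adj u v) :
    ∀ j : Fin n, j ∉ D.image Sigma.fst → ∃ i ∈ D.image Sigma.fst, G.Adj i j := by
  intro j hj
  have : Nonempty (W j) := Fintype.card_pos_iff.mp (by have := hcard j; omega)
  obtain ⟨w⟩ := this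
  have hv : (⟨j, w⟩ : Σ i, W i) ∉ D := fun h => hj (Finset.mem_image_of_mem _ h)
  obtain ⟨u, hu, hadj⟩ := hD _ hv
  refine ⟨u.1, Finset.mem_image_of_mem _ hu, ?_⟩
  rw [glex_adj hcomp] at hadj
  rcases hadj.2 with h | h
  · exact absurd (Finset.mem_image.mpr ⟨u, hu, h⟩) hj
  · exact h

lemma lift_dom (hcomp : ∀ i, ∀ a b : W i, a ≠ b → (F i).Adj a b)
    {Dh : Finset (Σ i, W i)}
    (hdom : ∀ j : Fin n, j ∉ Dh.image Sigma.fst → ∃ i ∈ Dh.image Sigma.fst, G.Adj i j) :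
    ∀ v, v ∉ Dh → ∃ u ∈ Dh, (glex G F).Adj u v := by
  classical
  intro v hv
  by_cases hj : v.1 ∈ Dh.image Sigma.fst
  · obtain ⟨x, hx, hx1⟩ := Finset.mem_image.mp hj
    exact ⟨x, hx, (glex_adj hcomp).mpr ⟨fun e => hv (e ▸ hx), Or.inl hx1⟩⟩
  · obtain ⟨i, hi, hadj⟩ := hdom _ hj
    obtain ⟨x, hx, hx1⟩ := Finset.mem_image.mp hi
    refine ⟨x, hx, (glex_adj hcomp).mpr ⟨?_, Or.inr (by rw [hx1]; exact hadj)⟩⟩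
    intro e
    exact hadj.ne (by rw [← hx1, e])

lemma gamma_glex (hcard : ∀ i, 2 ≤ Fintype.card (W i))
    (hcomp : ∀ i, ∀ a b : W i, a ≠ b → (F i).Adj a b) :
    gamma (glex G F) = gamma G := by
  classical
  have hne : ∀ i, Nonempty (W i) := fun i => Fintype.card_pos_iff.mp (by have := hcard i; omega)
  apply le_antisymm
  · obtain ⟨D, hdom, hDcard⟩ := exists_isGammaSet G
    set l0 : Fin n → Σ i, W i := fun i => ⟨i, Classical.arbitrary _⟩ with hl0
    have hinj : Function.Injective l0 := fun a b e => congrArg Sigma.fst e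
    have himg : (D.image l0).image Sigma.fst = D := by
      rw [Finset.image_image]
      have : Sigma.fst ∘ l0 = id := rfl
      rw [this, Finset.image_id]
    have := gamma_le_card (lift_dom hcomp (Dh := D.image l0) (by rw [himg]; exact hdom))
    rwa [Finset.card_image_of_injective _ hinj, hDcard] at this
  · obtain ⟨Dh, hdom, hDcard⟩ := exists_isGammaSet (glex G F)
    have h1 := gamma_le_card (dom_image_fst hcard hcomp hdom)
    calc gamma G ≤ (Dh.image Sigma.fst).card := h1
      _ ≤ Dh.card := Finset.card_image_le
      _ = gamma (glex G F) := hDcard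

lemma proj_gammaSet (hcard : ∀ i, 2 ≤ Fintype.card (W i))
    (hcomp : ∀ i, ∀ a b : W i, a ≠ b → (F i).Adj a b)
    {Dh : Finset (Σ i, W i)} (h : IsGammaSet (glex G F) Dh) :
    IsGammaSet G (Dh.image Sigma.fst) := by
  have hdom := dom_image_fst hcard hcomp h.1
  refine ⟨hdom, le_antisymm ?_ (gamma_le_card hdom)⟩
  calc (Dh.image Sigma.fst).card ≤ Dh.card := Finset.card_image_le
    _ = gamma (glex G F) := h.2
    _ = gamma G := gamma_glex hcard hcomp

lemma lifted_gammaSet (hcard : ∀ i, 2 ≤ Fintype.card (W i))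
    (hcomp : ∀ i, ∀ a b : W i, a ≠ b → (F i).Adj a b)
    {D I : Finset (Fin n)} (hD : IsGammaSet G D) (hID : I ⊆ D)
    {Ih : Finset (Σ i, W i)} (hIh : Ih.image Sigma.fst = I) (hIcard : Ih.card = I.card) :
    ∃ Dh : Finset (Σ i, W i), IsGammaSet (glex G F) Dh ∧ Ih ⊆ Dh := by
  classical
  have hne : ∀ i, Nonempty (W i) := fun i => Fintype.card_pos_iff.mp (by have := hcard i; omega)
  set l0 : Fin n → Σ i, W i := fun i => ⟨i, Classical.arbitrary _⟩ with hl0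
  have hinj : Function.Injective l0 := fun a b e => congrArg Sigma.fst e
  refine ⟨Ih ∪ (D \ I).image l0, ⟨?_, ?_⟩, Finset.subset_union_left⟩
  · apply lift_dom hcomp
    have himg : ((Ih ∪ (D \ I).image l0)).image Sigma.fst = D := by
      rw [Finset.image_union, hIh, Finset.image_image]
      have : Sigma.fst ∘ l0 = id := rfl
      rw [this, Finset.image_id, Finset.union_sdiff_of_subset hID]
    rw [himg]
    exact hD.1
  · have hdisj : Disjoint Ih ((D \ I).image l0) := by
      rw [Finset.disjoint_left]
      intro x hx hx'
      obtain ⟨i, hi, rfl⟩ := Finset.mem_image.mp hx'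
      have : (l0 i).1 ∈ I := by rw [← hIh]; exact Finset.mem_image_of_mem _ hx
      exact (Finset.mem_sdiff.mp hi).2 this
    rw [Finset.card_union_of_disjoint hdisj, Finset.card_image_of_injective _ hinj,
        hIcard, Finset.card_sdiff_of_subset hID, Nat.add_sub_cancel' (Finset.card_le_card hID),
        hD.2, gamma_glex hcard hcomp]

end Aux

/-- For `G` connected of order `n ≥ 2` and all fibers complete of order at least 2,
`G[Φ]` is `K̄ₛ`-γ-excellent iff `G` is. -/
theorem glex_Kbar_excellent_iff {n : ℕ} {W : Fin n → Type*} [∀ i, Fintype (W i)]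
    (G : SimpleGraph (Fin n)) (F : ∀ i, SimpleGraph (W i))
    (hn : 2 ≤ n) (hconn : G.Connected)
    (hcard : ∀ i, 2 ≤ Fintype.card (W i))
    (hcomplete : ∀ i, ∀ a b : W i, a ≠ b → (F i).Adj a b) (s : ℕ) (hs : 1 ≤ s) :
    KbarGammaExcellent (glex G F) s ↔ KbarGammaExcellent G s := by
  classical
  have hne : ∀ i, Nonempty (W i) := fun i => Fintype.card_pos_iff.mp (by have := hcard i; omega)
  set l0 : Fin n → Σ i, W i := fun i => ⟨i, Classical.arbitrary _⟩ with hl0def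
  have hl0inj : Function.Injective l0 := fun a b e => congrArg Sigma.fst e
  constructor
  · rintro ⟨hex1, hex2⟩
    constructor
    · intro I hind hcardI
      have hindh : ∀ u ∈ I.image l0, ∀ v ∈ I.image l0, ¬ (glex G F).Adj u v := by
        intro u hu v hv hadj
        obtain ⟨a, ha, rfl⟩ := Finset.mem_image.mp hu
        obtain ⟨b, hb, rfl⟩ := Finset.mem_image.mp hv
        rw [glex_adj hcomplete] at hadj
        rcases hadj.2 with h | h
        · exact hadj.1 (congrArg l0 h)
        · exact hind a ha b hb h
      have hcardh : (I.image l0).card = s := by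
        rw [Finset.card_image_of_injective _ hl0inj, hcardI]
      obtain ⟨Dh, hDh, hsub⟩ := hex1 (I.image l0) hindh hcardh
      refine ⟨Dh.image Sigma.fst, proj_gammaSet hcard hcomplete hDh, ?_⟩
      intro i hi
      exact Finset.mem_image.mpr ⟨l0 i, hsub (Finset.mem_image_of_mem _ hi), rfl⟩
    · intro i
      obtain ⟨Ih, hx, hindh, hcardh, Dh, hDh, hsub⟩ := hex2 (l0 i)
      have hinjOn : Set.InjOn (Sigma.fst : (Σ i, W i) → Fin n) ↑Ih := by
        intro a ha b hb hab
        by_contra hne'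
        exact hindh a ha b hb ((glex_adj hcomplete).mpr ⟨hne', Or.inl hab⟩)
      refine ⟨Ih.image Sigma.fst, Finset.mem_image.mpr ⟨l0 i, hx, rfl⟩, ?_, ?_,
        Dh.image Sigma.fst, proj_gammaSet hcard hcomplete hDh,
        Finset.image_subset_image hsub⟩
      · intro u hu v hv hadj
        obtain ⟨a, ha, rfl⟩ := Finset.mem_image.mp hu
        obtain ⟨b, hb, rfl⟩ := Finset.mem_image.mp hv
        exact hindh a ha b hb
          ((glex_adj hcomplete).mpr ⟨fun e => hadj.ne (congrArg Sigma.fst e), Or.inr hadj⟩)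
      · rw [Finset.card_image_of_injOn hinjOn, hcardh]
  · rintro ⟨hex1, hex2⟩
    constructor
    · intro Ih hindh hcardh
      have hinjOn : Set.InjOn (Sigma.fst : (Σ i, W i) → Fin n) ↑Ih := by
        intro a ha b hb hab
        by_contra hne'
        exact hindh a ha b hb ((glex_adj hcomplete).mpr ⟨hne', Or.inl hab⟩)
      have hIcard : (Ih.image Sigma.fst).card = s := by
        rw [Finset.card_image_of_injOn hinjOn, hcardh]
      have hind : ∀ u ∈ Ih.image Sigma.fst, ∀ v ∈ Ih.image Sigma.fst, ¬ G.Adj u v := by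
        intro u hu v hv hadj
        obtain ⟨a, ha, rfl⟩ := Finset.mem_image.mp hu
        obtain ⟨b, hb, rfl⟩ := Finset.mem_image.mp hv
        exact hindh a ha b hb
          ((glex_adj hcomplete).mpr ⟨fun e => hadj.ne (congrArg Sigma.fst e), Or.inr hadj⟩)
      obtain ⟨D, hD, hsub⟩ := hex1 _ hind hIcard
      exact lifted_gammaSet hcard hcomplete hD hsub rfl
        (Finset.card_image_of_injOn hinjOn).symm
    · intro x
      obtain ⟨I, hiI, hind, hIcard, D, hD, hsub⟩ := hex2 x.1
      set g : Fin n → Σ i, W i := fun j => if j = x.1 then x else l0 j with hg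
      have hgfst : ∀ j, (g j).1 = j := by
        intro j
        by_cases h : j = x.1
        · subst h; simp [hg]
        · simp [hg, h, hl0def]
      have hginj : Function.Injective g := fun a b e => by
        have := congrArg Sigma.fst e
        rwa [hgfst, hgfst] at this
      have hgx : g x.1 = x := by simp [hg]
      have himg : (I.image g).image Sigma.fst = I := by
        rw [Finset.image_image]
        have : Sigma.fst ∘ g = id := funext hgfst
        rw [this, Finset.image_id]
      refine ⟨I.image g, Finset.mem_image.mpr ⟨x.1, hiI, hgx⟩, ?_,
        by rw [Finset.card_image_of_injective _ hginj, hIcard], ?_⟩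
      · intro u hu v hv hadj
        obtain ⟨a, ha, rfl⟩ := Finset.mem_image.mp hu
        obtain ⟨b, hb, rfl⟩ := Finset.mem_image.mp hv
        rw [glex_adj hcomplete] at hadj
        rcases hadj.2 with h | h
        · rw [hgfst, hgfst] at h
          exact hadj.1 (congrArg g h)
        · rw [hgfst, hgfst] at h
          exact hind a ha b hb h
      · exact lifted_gammaSet hcard hcomplete hD hsub himg
          (Finset.card_image_of_injective _ hginj)
end
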